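/- If the principal solution X* = ⊕'_{k=1}^p A_k♯ ⊗' C ⊗' B_k♯ is not a solution of ⊕_{k=1}^p A_k ⊗ X ⊗ B_k = C, then the equation has no solution at all; equivalently, any solution X satisfies X ≤ X* and ⊕_k A_k ⊗ X* ⊗ B_k = C. -/

import Mathlib

/-- Min-plus addition on `EReal`: agrees with `+` on finite values, with `⊤` absorbing. -/
noncomputable def mpAdd (a b : EReal) : EReal := -((-a) + (-b))

/-- Max-plus matrix multiplication. -/
noncomputable def maxMul {α β γ : Type*} [Fintype β]
    (A : Matrix α β EReal) (B : Matrix β γ EReal) : Matrix α γ EReal :=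
  fun i j => ⨆ k, A i k + B k j

/-- Min-plus matrix multiplication. -/
noncomputable def minMul {α β γ : Type*} [Fintype β]
    (A : Matrix α β EReal) (B : Matrix β γ EReal) : Matrix α γ EReal :=
  fun i j => ⨅ k, mpAdd (A i k) (B k j)

/-- Max-plus matrix-vector multiplication. -/
noncomputable def maxMulVec {α β : Type*} [Fintype β]
    (A : Matrix α β EReal) (x : β → EReal) : α → EReal :=
  fun i => ⨆ j, A i j + x j

/-- Min-plus matrix-vector multiplication. -/
noncomputable def minMulVec {α β : Type*} [Fintype β]
    (A : Matrix α β EReal) (x : β → EReal) : α → EReal :=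
  fun i => ⨅ j, mpAdd (A i j) (x j)

/-- Conjugate `A♯ = -Aᵀ` (sending `-∞` to `+∞` and vice versa). -/
noncomputable def conj {α β : Type*} (A : Matrix α β EReal) : Matrix β α EReal :=
  fun j i => -(A i j)

/-- Max-plus Kronecker product: block `(i,k),(j,l)` entry is `A i j + B k l`. -/
noncomputable def kron {α β γ δ : Type*} (A : Matrix α β EReal) (B : Matrix γ δ EReal) :
    Matrix (α × γ) (β × δ) EReal :=
  fun ik jl => A ik.1 jl.1 + B ik.2 jl.2

/-- Min-plus Kronecker product. -/
noncomputable def minKron {α β γ δ : Type*} (A : Matrix α β EReal) (B : Matrix γ δ EReal) :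
    Matrix (α × γ) (β × δ) EReal :=
  fun ik jl => mpAdd (A ik.1 jl.1) (B ik.2 jl.2)

/-- Column-stacking vectorization: `vec X (j, i) = X i j`. -/
def vec {α β : Type*} (X : Matrix α β EReal) : β × α → EReal := fun p => X p.2 p.1

/-- Entries lie in `ℝ ∪ {-∞}`, i.e. no `+∞` entries. -/
def RMaxEntries {α β : Type*} (A : Matrix α β EReal) : Prop := ∀ i j, A i j ≠ ⊤

/-- Doubly ℝ-astic: entries in `ℝ ∪ {-∞}`, with a finite entry in each row and column. -/
def DoublyRAstic {α β : Type*} (A : Matrix α β EReal) : Prop :=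
  (∀ i j, A i j ≠ ⊤) ∧ (∀ i, ∃ j, A i j ≠ ⊥) ∧ (∀ j, ∃ i, A i j ≠ ⊥)

/-- All entries of the matrix are finite reals. -/
def FiniteEntries {α β : Type*} (C : Matrix α β EReal) : Prop :=
  ∀ i j, ∃ r : ℝ, C i j = (r : EReal)

/-- All entries of the vector are finite reals. -/
def FiniteVec {α : Type*} (b : α → EReal) : Prop := ∀ i, ∃ r : ℝ, b i = (r : EReal)


/- The map `X ↦ ⊕ₖ Aₖ ⊗ X ⊗ Bₖ` (`sumTwoSidedMul`) is residuated, with residual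
`C ↦ ⊕'ₖ Aₖ♯ ⊗' C ⊗' Bₖ♯` (`principalSolution`), because `a + ·` on `EReal` is residuated by
`mpAdd (-a) ·`. For a residuated map `l` with residual `u`, every solution `X` of `l X = C`
satisfies `X ≤ u C`, and then `l (u C) = l (u (l X)) = l X = C`. -/

lemma mpAdd_comm (a b : EReal) : mpAdd a b = mpAdd b a := by
  simp only [mpAdd, add_comm]

lemma gc_add_mpAdd_neg (a : EReal) : GaloisConnection (a + ·) (mpAdd (-a) ·) := by
  intro b c
  simp only [mpAdd, neg_neg]
  induction a using EReal.rec <;> induction b using EReal.rec <;> induction c using EReal.rec <;>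
    simp_all [← EReal.coe_add, ← EReal.coe_neg, EReal.coe_le_coe_iff]
  constructor <;> intro h <;> linarith

lemma add_le_iff_le_neg_mpAdd {a b c : EReal} : a + b ≤ c ↔ b ≤ mpAdd (-a) c :=
  gc_add_mpAdd_neg a b c

lemma add_iSup_eq {ι : Sort*} (a : EReal) (f : ι → EReal) : a + ⨆ i, f i = ⨆ i, a + f i :=
  (gc_add_mpAdd_neg a).l_iSup

lemma add_le_iff_le_mpAdd_neg {a b c : EReal} : a + b ≤ c ↔ a ≤ mpAdd c (-b) := by
  rw [add_comm, mpAdd_comm, add_le_iff_le_neg_mpAdd]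

section Residuation

variable {ι μ α β ν : Type*}

noncomputable def sumTwoSidedMul [Fintype α] [Fintype β]
    (A : ι → Matrix μ α EReal) (B : ι → Matrix β ν EReal)
    (X : α → β → EReal) : μ → ν → EReal :=
  fun s t => ⨆ k, maxMul (A k) (maxMul X (B k)) s t

noncomputable def principalSolution [Fintype μ] [Fintype ν]
    (A : ι → Matrix μ α EReal) (B : ι → Matrix β ν EReal)
    (C : μ → ν → EReal) : α → β → EReal :=
  fun i j => ⨅ k, minMul (conj (A k)) (minMul C (conj (B k))) i j

variable (A : ι → Matrix μ α EReal) (B : ι → Matrix β ν EReal)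

lemma sumTwoSidedMul_le_iff [Fintype α] [Fintype β] {X : α → β → EReal} {C : μ → ν → EReal} :
    sumTwoSidedMul A B X ≤ C ↔ ∀ k s i j t, A k s i + (X i j + B k j t) ≤ C s t := by
  simp only [Pi.le_def, sumTwoSidedMul, maxMul, iSup_le_iff, add_iSup_eq]
  exact ⟨fun h k s i j t => h s t k i j, fun h s t k i j => h k s i j t⟩

lemma le_principalSolution_iff [Fintype μ] [Fintype ν] {X : α → β → EReal}
    {C : μ → ν → EReal} :
    X ≤ principalSolution A B C ↔ ∀ k s i j t, A k s i + (X i j + B k j t) ≤ C s t := by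
  simp only [Pi.le_def, principalSolution, minMul, conj, le_iInf_iff,
    ← add_le_iff_le_neg_mpAdd, ← add_le_iff_le_mpAdd_neg, add_assoc]
  exact ⟨fun h k s i j t => h i j k s t, fun h i j k s t => h k s i j t⟩

theorem gc_sumTwoSidedMul_principalSolution [Fintype μ] [Fintype α] [Fintype β]
    [Fintype ν] :
    GaloisConnection (α := α → β → EReal) (β := μ → ν → EReal)
      (sumTwoSidedMul A B) (principalSolution A B) := fun _ _ => by
  rw [sumTwoSidedMul_le_iff, le_principalSolution_iff]

end Residuation

theorem stmt18_general {m n p : ℕ} (A : Fin p → Matrix (Fin m) (Fin m) EReal)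
    (B : Fin p → Matrix (Fin n) (Fin n) EReal) (C : Matrix (Fin m) (Fin n) EReal) :
    ((fun i j => ⨆ k, maxMul (A k) (maxMul
        (fun i' j' => ⨅ k', minMul (conj (A k')) (minMul C (conj (B k'))) i' j')
        (B k)) i j) ≠ C →
      ¬ ∃ X : Matrix (Fin m) (Fin n) EReal, RMaxEntries X ∧
        (fun i j => ⨆ k, maxMul (A k) (maxMul X (B k)) i j) = C) ∧
    (∀ X : Matrix (Fin m) (Fin n) EReal, RMaxEntries X →
      (fun i j => ⨆ k, maxMul (A k) (maxMul X (B k)) i j) = C →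
      (∀ i j, X i j ≤ ⨅ k', minMul (conj (A k')) (minMul C (conj (B k'))) i j) ∧
      (fun i j => ⨆ k, maxMul (A k) (maxMul
        (fun i' j' => ⨅ k', minMul (conj (A k')) (minMul C (conj (B k'))) i' j')
        (B k)) i j) = C) := by
  have gc := gc_sumTwoSidedMul_principalSolution A B
  have of_solution : ∀ X, sumTwoSidedMul A B X = C →
      X ≤ principalSolution A B C ∧ sumTwoSidedMul A B (principalSolution A B C) = C := by
    rintro X rfl
    exact ⟨gc.le_u_l X, gc.l_u_l_eq_l X⟩
  exact ⟨fun hne ⟨X, _, hX⟩ => hne (of_solution X hX).2, fun X _ hX => of_solution X hX⟩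

theorem stmt18 {m n p : ℕ} (A : Fin p → Matrix (Fin m) (Fin m) EReal)
    (B : Fin p → Matrix (Fin n) (Fin n) EReal) (C : Matrix (Fin m) (Fin n) EReal)
    (hA : ∀ k, DoublyRAstic (A k)) (hB : ∀ k, DoublyRAstic (B k)) (hC : FiniteEntries C) :
    ((fun i j => ⨆ k, maxMul (A k) (maxMul
        (fun i' j' => ⨅ k', minMul (conj (A k')) (minMul C (conj (B k'))) i' j')
        (B k)) i j) ≠ C →
      ¬ ∃ X : Matrix (Fin m) (Fin n) EReal, RMaxEntries X ∧
        (fun i j => ⨆ k, maxMul (A k) (maxMul X (B k)) i j) = C) ∧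
    (∀ X : Matrix (Fin m) (Fin n) EReal, RMaxEntries X →
      (fun i j => ⨆ k, maxMul (A k) (maxMul X (B k)) i j) = C →
      (∀ i j, X i j ≤ ⨅ k', minMul (conj (A k')) (minMul C (conj (B k'))) i j) ∧
      (fun i j => ⨆ k, maxMul (A k) (maxMul
        (fun i' j' => ⨅ k', minMul (conj (A k')) (minMul C (conj (B k'))) i' j')
        (B k)) i j) = C) :=
  stmt18_general A B C
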